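/- arXiv:1503.01604 — 2 statements merged into one kernel-verified Lean document; each statement's English description precedes it below -/
import Mathlib

section
/- Let G and H be terminal graphs with equal terminal sets X_G = X_H, and let G', H' be terminal graphs with G' ∼_P G, H' ∼_P H, X_{G'} = X_G, and X_{H'} = X_H. Then (G ⊕ H) ⊕_T X_G ∼_P (G' ⊕ H') ⊕_T X_{G'}. -/
/-- A plain graph: vertex set and edge set (over an ambient vertex type). -/
structure PGraph (V : Type) where
  verts : Set V
  edges : Set (Sym2 V)

/-- A terminal graph: graph together with an ordered list of terminals. -/
structure TermGraph (V : Type) where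
  verts : Set V
  edges : Set (Sym2 V)
  terms : List V

variable {V : Type} [DecidableEq V]

/-- The map renaming the `i`-th terminal of `K` to the `i`-th terminal of `G`
(used to identify corresponding terminals when gluing). -/
def glueMap (G K : TermGraph V) (x : V) : V :=
  if x ∈ K.terms then G.terms.getD (K.terms.idxOf x) x else x

/-- Gluing `G ⊕ K`: disjoint union with corresponding terminals identified
(parallel edges dropped, result is a plain graph). -/
def oplus (G K : TermGraph V) : PGraph V :=
  ⟨G.verts ∪ (glueMap G K) '' K.verts, G.edges ∪ (Sym2.map (glueMap G K)) '' K.edges⟩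

/-- Gluing, keeping the terminal list of `G` (a terminal graph version of `⊕`). -/
def oplusTG (G K : TermGraph V) : TermGraph V :=
  ⟨G.verts ∪ (glueMap G K) '' K.verts, G.edges ∪ (Sym2.map (glueMap G K)) '' K.edges, G.terms⟩

/-- `G ⊕_T X`: add the vertices of `X` and make `X` the new terminal list. -/
def oplusT (G : TermGraph V) (X : List V) : TermGraph V :=
  ⟨G.verts ∪ {x | x ∈ X}, G.edges, X⟩

/-- `G ⊕_▷ H`: union of vertices and edges, keeping the terminals of `G`. -/
def oplusRhd (G H : TermGraph V) : TermGraph V :=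
  ⟨G.verts ∪ H.verts, G.edges ∪ H.edges, G.terms⟩

/-- The equivalence `G ∼_P H`: same boundary size, and for every terminal
graph `K` of matching boundary size, `P (G ⊕ K) ↔ P (H ⊕ K)`. -/
def EquivP (P : PGraph V → Prop) (G H : TermGraph V) : Prop :=
  G.terms.length = H.terms.length ∧
    ∀ K : TermGraph V, K.terms.length = G.terms.length →
      (P (oplus G K) ↔ P (oplus H K))

/-! Gluing along two equal terminal lists identifies nothing, so `A ⊕ K` is the plain union
`A ∪ K`. Hence `((G ⊕ H) ⊕_T X) ⊕ K` is the union `G ∪ H ∪ R`, where `R = glueImage G K` is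
`K` glued onto `X` together with `X` itself; all three pieces have terminal list `X`.
Replacing `G` by `G'` is then an instance of `G' ∼_P G` tested against `H ∪ R`, and replacing
`H` by `H'` one of `H' ∼_P H` tested against `G' ∪ R`. -/

lemma glueMap_congr_left {A B : TermGraph V} (K : TermGraph V) (h : A.terms = B.terms) :
    glueMap A K = glueMap B K := by
  unfold glueMap; rw [h]

lemma glueMap_eq_id_of_terms_eq {A K : TermGraph V} (h : A.terms = K.terms) :
    glueMap A K = id := by
  funext x
  unfold glueMap
  split_ifs with hx
  · rw [h, List.getD_eq_getElem _ _ (List.idxOf_lt_length_iff.mpr hx)]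
    exact List.getElem_idxOf _
  · rfl

lemma oplus_eq_union_of_terms_eq {A K : TermGraph V} (h : A.terms = K.terms) :
    oplus A K = ⟨A.verts ∪ K.verts, A.edges ∪ K.edges⟩ := by
  simp only [oplus, glueMap_eq_id_of_terms_eq h, Sym2.map_id, Set.image_id]

lemma EquivP.union_iff {P : PGraph V → Prop} {A B K : TermGraph V} (hAB : EquivP P A B)
    (hA : A.terms = K.terms) (hB : B.terms = K.terms) :
    P ⟨A.verts ∪ K.verts, A.edges ∪ K.edges⟩ ↔ P ⟨B.verts ∪ K.verts, B.edges ∪ K.edges⟩ := by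
  rw [← oplus_eq_union_of_terms_eq hA, ← oplus_eq_union_of_terms_eq hB]
  exact hAB.2 K (by rw [hA])

def glueImage (A K : TermGraph V) : TermGraph V :=
  ⟨glueMap A K '' K.verts ∪ {x | x ∈ A.terms}, Sym2.map (glueMap A K) '' K.edges, A.terms⟩

lemma glueImage_congr_left {A B : TermGraph V} (K : TermGraph V) (h : A.terms = B.terms) :
    glueImage A K = glueImage B K := by
  simp only [glueImage, glueMap_congr_left K h, h]

lemma oplus_oplusT_oplusTG {A B : TermGraph V} (K : TermGraph V) (hAB : A.terms = B.terms) :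
    oplus (oplusT (oplusTG A B) A.terms) K =
      ⟨A.verts ∪ (B.verts ∪ (glueImage A K).verts),
        A.edges ∪ (B.edges ∪ (glueImage A K).edges)⟩ := by
  have hK : glueMap (oplusT (oplusTG A B) A.terms) K = glueMap A K := glueMap_congr_left K rfl
  rw [oplus, hK]
  simp only [oplusT, oplusTG, glueImage, glueMap_eq_id_of_terms_eq hAB, Sym2.map_id,
    Set.image_id, Set.union_assoc, Set.union_comm {x | x ∈ A.terms}]

/-- if `X_G = X_H`, `G' ∼_P G`, `H' ∼_P H` with matching terminal
sets, then `(G ⊕ H) ⊕_T X_G ∼_P (G' ⊕ H') ⊕_T X_{G'}`. -/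
theorem oplus_oplusT_equivP (P : PGraph V → Prop) (G H G' H' : TermGraph V)
    (hGH : G.terms = H.terms)
    (hG' : EquivP P G' G) (hH' : EquivP P H' H)
    (hXG : G'.terms = G.terms) (hXH : H'.terms = H.terms) :
    EquivP P (oplusT (oplusTG G H) G.terms) (oplusT (oplusTG G' H') G'.terms) := by
  refine ⟨by simp only [oplusT, hXG], fun K _ => ?_⟩
  set R := glueImage G K
  have hG'H' : G'.terms = H'.terms := by rw [hXG, hXH, hGH]
  rw [oplus_oplusT_oplusTG K hGH, oplus_oplusT_oplusTG K hG'H', glueImage_congr_left K hXG]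
  calc P ⟨G.verts ∪ (H.verts ∪ R.verts), G.edges ∪ (H.edges ∪ R.edges)⟩
      ↔ P ⟨G'.verts ∪ (H.verts ∪ R.verts), G'.edges ∪ (H.edges ∪ R.edges)⟩ :=
        (hG'.union_iff (K := oplusRhd H R) (hXG.trans hGH) hGH).symm
    _ ↔ P ⟨H.verts ∪ (G'.verts ∪ R.verts), H.edges ∪ (G'.edges ∪ R.edges)⟩ := by
        rw [Set.union_left_comm G'.verts, Set.union_left_comm G'.edges]
    _ ↔ P ⟨H'.verts ∪ (G'.verts ∪ R.verts), H'.edges ∪ (G'.edges ∪ R.edges)⟩ :=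
        (hH'.union_iff (K := oplusRhd G' R) hG'H'.symm (hGH.symm.trans hXG.symm)).symm
    _ ↔ P ⟨G'.verts ∪ (H'.verts ∪ R.verts), G'.edges ∪ (H'.edges ∪ R.edges)⟩ := by
        rw [Set.union_left_comm H'.verts, Set.union_left_comm H'.edges]
end

section
/- Let G be a graph with spanning tree T, and let k = max{vr(G,T), er(G,T) + 1}. Then G has treewidth at most k. Specifically, the tree decomposition obtained by subdividing each tree edge (creating a node for each vertex and each tree edge), putting v in the bag of node v, both endpoints of e in the bag of node e, and adding for each non-tree edge one fixed endpoint to every bag of a vertex or edge on its fundamental cycle, is a valid tree decomposition of width at most k. -/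
open SimpleGraph

/-- The fundamental cycle (w.r.t. the spanning forest `T` of `G`) of the
non-tree edge `e` passes through the vertex `v`. -/
def FundCycThroughV {V : Type} (G T : SimpleGraph V) (v : V) (e : Sym2 V) : Prop :=
  e ∈ G.edgeSet ∧ e ∉ T.edgeSet ∧
    ∃ a b : V, e = s(a, b) ∧ ∃ p : T.Walk a b, p.IsPath ∧ v ∈ p.support

/-- The fundamental cycle (w.r.t. `T`) of the non-tree edge `e` uses the tree
edge `f`. -/
def FundCycUsesE {V : Type} (G T : SimpleGraph V) (f e : Sym2 V) : Prop :=
  e ∈ G.edgeSet ∧ e ∉ T.edgeSet ∧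
    ∃ a b : V, e = s(a, b) ∧ ∃ p : T.Walk a b, p.IsPath ∧ f ∈ p.edges

/-- A tree decomposition of `G` with index (node) type `ι`. -/
structure TreeDecomp {V : Type} (G : SimpleGraph V) (ι : Type) where
  tree : SimpleGraph ι
  isTree : tree.IsTree
  bag : ι → Set V
  mem_bag : ∀ v : V, ∃ t, v ∈ bag t
  edge_bag : ∀ a b : V, G.Adj a b → ∃ t, a ∈ bag t ∧ b ∈ bag t
  coherence : ∀ v : V, (tree.induce {t | v ∈ bag t}).Connected

/-- `G` has treewidth at most `k`: some tree decomposition has all bags of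
size at most `k + 1`. -/
def TreewidthLE {V : Type} (G : SimpleGraph V) (k : ℕ) : Prop :=
  ∃ (ι : Type) (D : TreeDecomp G ι), ∀ t, (D.bag t).ncard ≤ k + 1

/-!
Subdividing every edge of the spanning tree `T` gives a tree whose nodes are the vertices of `G`
and the edges of `T`. The bag of a node consists of the vertices it contains (the vertex itself,
or the two endpoints of the tree edge) together with one fixed endpoint of every non-tree edge
whose fundamental cycle passes through the node. The nodes whose bag contains `u` are the star of
`u` and the subdivided fundamental paths of the non-tree edges with fixed endpoint `u`, each of
which starts at `u`; hence they span a subtree. A non-tree edge `xy` lies in the bag of its endpoint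
that was not fixed, and the bags have at most `1 + vr(G,T)` resp. `2 + er(G,T)` elements.
-/

open Sum

lemma Sym2.ncard_setOf_mem_le {α : Type*} (z : Sym2 α) : {x | x ∈ z}.ncard ≤ 2 := by
  induction z using Sym2.ind with | _ x y => ?_
  have hxy : {v | v ∈ s(x, y)} = {x, y} := by ext; simp
  rw [hxy]
  exact (Set.ncard_insert_le _ _).trans (by simp)

namespace SimpleGraph

variable {V : Type} {G : SimpleGraph V}

def subdivision (G : SimpleGraph V) : SimpleGraph (V ⊕ G.edgeSet) where
  Adj
    | inl v, inr e => v ∈ (e : Sym2 V)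
    | inr e, inl v => v ∈ (e : Sym2 V)
    | _, _ => False
  symm := ⟨by rintro (v | e) (w | f) h <;> exact h⟩
  loopless := ⟨by rintro (v | e) h <;> exact h⟩

@[simp] lemma subdivision_adj_inl_inr {v : V} {e : G.edgeSet} :
    G.subdivision.Adj (inl v) (inr e) ↔ v ∈ (e : Sym2 V) := Iff.rfl

@[simp] lemma subdivision_adj_inr_inl {v : V} {e : G.edgeSet} :
    G.subdivision.Adj (inr e) (inl v) ↔ v ∈ (e : Sym2 V) := Iff.rfl

def Walk.toSubdivision : ∀ {x y : V}, G.Walk x y → G.subdivision.Walk (inl x) (inl y)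
  | _, _, .nil => .nil
  | _, _, @Walk.cons _ _ x z _ h p =>
      .cons (v := inr ⟨s(x, z), h⟩) (subdivision_adj_inl_inr.2 (Sym2.mem_mk_left x z))
        (.cons (subdivision_adj_inr_inl.2 (Sym2.mem_mk_right x z)) p.toSubdivision)

@[simp] lemma Walk.inl_mem_support_toSubdivision {x y v : V} (p : G.Walk x y) :
    inl v ∈ p.toSubdivision.support ↔ v ∈ p.support := by
  induction p with
  | nil => simp [toSubdivision]
  | cons h p ih => simp [toSubdivision, ih]

@[simp] lemma Walk.inr_mem_support_toSubdivision {x y : V} {e : G.edgeSet} (p : G.Walk x y) :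
    inr e ∈ p.toSubdivision.support ↔ (e : Sym2 V) ∈ p.edges := by
  induction p with
  | nil => simp [toSubdivision]
  | cons h p ih => simp [toSubdivision, ih, Subtype.ext_iff]

lemma Connected.subdivision (hG : G.Connected) : G.subdivision.Connected := by
  obtain ⟨v₀⟩ := hG.nonempty
  have hinl : ∀ w, G.subdivision.Reachable (inl v₀) (inl w) :=
    fun w => ⟨(hG.preconnected v₀ w).some.toSubdivision⟩
  rw [connected_iff_exists_forall_reachable]
  refine ⟨inl v₀, ?_⟩
  rintro (w | e)
  · exact hinl w
  · exact (hinl _).trans (Adj.reachable (Sym2.out_fst_mem (e : Sym2 V)))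

lemma exists_dart_fst_eq_edge_eq {v : V} (e : G.edgeSet) (hv : v ∈ (e : Sym2 V)) :
    ∃ d : G.Dart, d.fst = v ∧ d.edge = e :=
  ⟨⟨(v, Sym2.Mem.other hv), by rw [← mem_edgeSet, Sym2.other_spec hv]; exact e.2⟩, rfl,
    Sym2.other_spec hv⟩

noncomputable def dartEquivEdgeSetSubdivision : G.Dart ≃ G.subdivision.edgeSet :=
  Equiv.ofBijective
    (fun d => ⟨s(inl d.fst, inr ⟨d.edge, d.edge_mem⟩), Sym2.mem_mk_left d.fst d.snd⟩) <| by
    constructor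
    · rintro ⟨⟨a, b⟩, hab⟩ ⟨⟨a', b'⟩, hab'⟩ h
      simp only [Subtype.mk.injEq, Sym2.eq_iff, inl.injEq, inr.injEq, reduceCtorEq, Dart.edge,
        and_false, or_false] at h
      rcases h with ⟨rfl, ⟨-, rfl⟩ | ⟨rfl, rfl⟩⟩
      · rfl
      · exact (hab.ne rfl).elim
    · rintro ⟨z, hz⟩
      induction z using Sym2.ind with | _ x y => ?_
      rcases x with v | e <;> rcases y with w | f
      · exact (hz : False).elim
      · obtain ⟨d, rfl, hd⟩ := exists_dart_fst_eq_edge_eq f hz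
        exact ⟨d, by simp [hd]⟩
      · obtain ⟨d, rfl, hd⟩ := exists_dart_fst_eq_edge_eq e hz
        exact ⟨d, by simp [hd, Sym2.eq_swap]⟩
      · exact (hz : False).elim

lemma card_edgeSet_subdivision [Finite V] :
    Nat.card G.subdivision.edgeSet = 2 * Nat.card G.edgeSet := by
  classical
  have := Fintype.ofFinite V
  rw [← Nat.card_congr (dartEquivEdgeSetSubdivision (G := G)), Nat.card_eq_fintype_card,
    dart_card_eq_twice_card_edges, edgeFinset_card, Nat.card_eq_fintype_card]

lemma IsTree.subdivision [Finite V] (hG : G.IsTree) : G.subdivision.IsTree := by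
  have hcard := (isTree_iff_connected_and_card.1 hG).2
  refine isTree_iff_connected_and_card.2 ⟨hG.connected.subdivision, ?_⟩
  rw [card_edgeSet_subdivision, Nat.card_sum]
  omega

lemma induce_connected_of_forall_exists_walk {s : Set V} (u : V) (hu : u ∈ s)
    (h : ∀ v ∈ s, ∃ (w : V) (p : G.Walk u w), v ∈ p.support ∧ ∀ x ∈ p.support, x ∈ s) :
    (G.induce s).Connected :=
  induce_connected_of_patches u hu fun hv => by
    obtain ⟨w, p, hvp, hps⟩ := h _ hv
    exact ⟨_, hps, p.start_mem_support, hvp, p.connected_induce_support.preconnected _ _⟩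

lemma IsAcyclic.support_subset_and_edges_subset_of_sym2_eq (hG : G.IsAcyclic) {a b u w : V}
    (h : s(a, b) = s(u, w)) {p : G.Walk a b} (hp : p.IsPath) {q : G.Walk u w} (hq : q.IsPath) :
    p.support ⊆ q.support ∧ p.edges ⊆ q.edges := by
  rcases Sym2.eq_iff.1 h with ⟨rfl, rfl⟩ | ⟨rfl, rfl⟩
  · obtain rfl : p = q := congrArg Subtype.val ((hG.subsingleton_path _ _).elim ⟨p, hp⟩ ⟨q, hq⟩)
    exact ⟨List.Subset.refl _, List.Subset.refl _⟩
  · obtain rfl : p.reverse = q :=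
      congrArg Subtype.val ((hG.subsingleton_path _ _).elim ⟨p.reverse, hp.reverse⟩ ⟨q, hq⟩)
    simp

end SimpleGraph

section RememberNumbers

variable {V : Type} {G T : SimpleGraph V}

lemma fundCycThroughV_iff (hT : T.IsAcyclic) {u w v : V} {q : T.Walk u w} (hq : q.IsPath) :
    FundCycThroughV G T v s(u, w) ↔ s(u, w) ∈ G.edgeSet ∧ s(u, w) ∉ T.edgeSet ∧ v ∈ q.support :=
  ⟨fun ⟨heG, heT, _, _, hab, _, hp, hv⟩ =>
      ⟨heG, heT, (hT.support_subset_and_edges_subset_of_sym2_eq hab.symm hp hq).1 hv⟩,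
    fun ⟨heG, heT, hv⟩ => ⟨heG, heT, u, w, rfl, q, hq, hv⟩⟩

lemma fundCycUsesE_iff (hT : T.IsAcyclic) {u w : V} {f : Sym2 V} {q : T.Walk u w}
    (hq : q.IsPath) :
    FundCycUsesE G T f s(u, w) ↔ s(u, w) ∈ G.edgeSet ∧ s(u, w) ∉ T.edgeSet ∧ f ∈ q.edges :=
  ⟨fun ⟨heG, heT, _, _, hab, _, hp, hf⟩ =>
      ⟨heG, heT, (hT.support_subset_and_edges_subset_of_sym2_eq hab.symm hp hq).2 hf⟩,
    fun ⟨heG, heT, hf⟩ => ⟨heG, heT, u, w, rfl, q, hq, hf⟩⟩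

def OnFundCycle (G T : SimpleGraph V) (e : Sym2 V) : V ⊕ T.edgeSet → Prop
  | inl v => FundCycThroughV G T v e
  | inr f => FundCycUsesE G T f e

lemma OnFundCycle.mem_edgeSet_and_not_mem {e : Sym2 V} {t : V ⊕ T.edgeSet}
    (h : OnFundCycle G T e t) : e ∈ G.edgeSet ∧ e ∉ T.edgeSet := by
  cases t <;> exact ⟨h.1, h.2.1⟩

lemma exists_walk_support_iff_onFundCycle (hT : T.IsTree) {e : Sym2 V} (heG : e ∈ G.edgeSet)
    (heT : e ∉ T.edgeSet) {u : V} (hu : u ∈ e) :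
    ∃ (w : V) (p : T.subdivision.Walk (inl u) (inl w)),
      ∀ t, t ∈ p.support ↔ OnFundCycle G T e t := by
  obtain ⟨w, rfl⟩ : ∃ w, s(u, w) = e := ⟨_, Sym2.other_spec hu⟩
  obtain ⟨q, hq, -⟩ := hT.existsUnique_path u w
  refine ⟨w, q.toSubdivision, ?_⟩
  rintro (v | f) <;> simp [OnFundCycle, fundCycThroughV_iff hT.isAcyclic hq,
    fundCycUsesE_iff hT.isAcyclic hq, heG, heT]

/-- The first part is the set of vertices contained in the node `t`; `e.out.1` is the endpoint
fixed for the edge `e`. -/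
def rememberBag (G T : SimpleGraph V) (t : V ⊕ T.edgeSet) : Set V :=
  {x | inl x = t ∨ T.subdivision.Adj (inl x) t} ∪ (fun e => e.out.1) '' {e | OnFundCycle G T e t}

lemma exists_mem_rememberBag_of_adj (hT : T.IsTree) {x y : V} (h : G.Adj x y) :
    ∃ t, x ∈ rememberBag G T t ∧ y ∈ rememberBag G T t := by
  by_cases hxy : T.Adj x y
  · exact ⟨inr ⟨s(x, y), hxy⟩, Or.inl (Or.inr (Sym2.mem_mk_left x y)),
      Or.inl (Or.inr (Sym2.mem_mk_right x y))⟩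
  have hon : ∀ v ∈ s(x, y), OnFundCycle G T s(x, y) (inl v) := fun v hv => by
    obtain ⟨_, p, hp⟩ := exists_walk_support_iff_onFundCycle hT h hxy hv
    exact (hp _).1 p.start_mem_support
  rcases Sym2.mem_iff.1 (Sym2.out_fst_mem s(x, y)) with hx | hy
  · exact ⟨inl y, Or.inr ⟨_, hon y (Sym2.mem_mk_right x y), hx⟩, Or.inl (Or.inl rfl)⟩
  · exact ⟨inl x, Or.inl (Or.inl rfl), Or.inr ⟨_, hon x (Sym2.mem_mk_left x y), hy⟩⟩

lemma induce_rememberBag_connected (hT : T.IsTree) (u : V) :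
    (T.subdivision.induce {t | u ∈ rememberBag G T t}).Connected := by
  have hu : u ∈ rememberBag G T (inl u) := Or.inl (Or.inl rfl)
  refine induce_connected_of_forall_exists_walk (inl u) hu ?_
  rintro t ((rfl | hadj) | ⟨e, he, rfl⟩)
  · exact ⟨_, .nil, by simp, by simpa using hu⟩
  · have ht : u ∈ rememberBag G T t := Or.inl (Or.inr hadj)
    exact ⟨_, .cons hadj .nil, by simp, by simp [hu, ht]⟩
  · obtain ⟨heG, heT⟩ := he.mem_edgeSet_and_not_mem
    obtain ⟨w, p, hp⟩ := exists_walk_support_iff_onFundCycle hT heG heT (Sym2.out_fst_mem e)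
    exact ⟨inl w, p, (hp t).2 he, fun x hx => Or.inr ⟨e, (hp x).1 hx, rfl⟩⟩

lemma ncard_rememberBag_le [Finite V] {a b : ℕ}
    (hvr : ∀ v : V, {e : Sym2 V | FundCycThroughV G T v e}.ncard ≤ a)
    (her : ∀ f ∈ T.edgeSet, {e : Sym2 V | FundCycUsesE G T f e}.ncard ≤ b)
    (t : V ⊕ T.edgeSet) : (rememberBag G T t).ncard ≤ max a (b + 1) + 1 := by
  have hbag : (rememberBag G T t).ncard ≤
      {x | inl x = t ∨ T.subdivision.Adj (inl x) t}.ncard + {e | OnFundCycle G T e t}.ncard :=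
    (Set.ncard_union_le _ _).trans (Nat.add_le_add_left (Set.ncard_image_le (Set.toFinite _)) _)
  rcases t with v | f
  · have hcore :
        {x | inl x = (inl v : V ⊕ T.edgeSet) ∨ T.subdivision.Adj (inl x) (inl v)} = {v} := by
      ext; simp [subdivision]
    have := hvr v
    simp only [hcore, Set.ncard_singleton, OnFundCycle] at hbag
    omega
  · have hcore : {x | inl x = (inr f : V ⊕ T.edgeSet) ∨ T.subdivision.Adj (inl x) (inr f)} =
        {x | x ∈ (f : Sym2 V)} := by
      ext; simp
    have := her f f.2
    have := Sym2.ncard_setOf_mem_le (f : Sym2 V)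
    simp only [hcore, OnFundCycle] at hbag
    omega

end RememberNumbers

theorem treewidth_le_of_remember_numbers_general {V : Type} [Fintype V]
    (G T : SimpleGraph V) (hT : T.IsTree) (a b : ℕ)
    (hvr : ∀ v : V, {e : Sym2 V | FundCycThroughV G T v e}.ncard ≤ a)
    (her : ∀ f ∈ T.edgeSet, {e : Sym2 V | FundCycUsesE G T f e}.ncard ≤ b) :
    TreewidthLE G (max a (b + 1)) :=
  ⟨V ⊕ T.edgeSet,
    { tree := T.subdivision
      isTree := hT.subdivision
      bag := rememberBag G T
      mem_bag := fun v => ⟨inl v, Or.inl (Or.inl rfl)⟩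
      edge_bag := fun _ _ => exists_mem_rememberBag_of_adj hT
      coherence := induce_rememberBag_connected hT },
    ncard_rememberBag_le hvr her⟩

/-- if `T` is a spanning tree of `G` with vertex remember number
at most `a` and edge remember number at most `b`, then `G` has treewidth at
most `k = max a (b + 1)`. -/
theorem treewidth_le_of_remember_numbers {V : Type} [Fintype V]
    (G T : SimpleGraph V) (hle : T ≤ G) (hT : T.IsTree) (a b : ℕ)
    (hvr : ∀ v : V, {e : Sym2 V | FundCycThroughV G T v e}.ncard ≤ a)
    (her : ∀ f ∈ T.edgeSet, {e : Sym2 V | FundCycUsesE G T f e}.ncard ≤ b) :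
    TreewidthLE G (max a (b + 1)) :=
  treewidth_le_of_remember_numbers_general G T hT a b hvr her
end
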